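/- arXiv:math/0401228 — 2 statements merged into one kernel-verified Lean document; each statement's English description precedes it below -/
import Mathlib

section
/- Let p be an odd prime, m a positive integer with p ∤ m, and 0 < c < m. Then (−1)^{⌊pc/m⌋}·C(p−1, ⌊pc/m⌋) ≡ 1 + p·(B_{p−1}({pc/m}) − B_{p−1}) (mod p²), where the right-hand side is interpreted in ℤ_p (the difference B_{p−1}({pc/m}) − B_{p−1} lies in ℤ_p). -/
/-!
All congruences are read in `ℚ_[p]`, "≡ mod pᵏ" meaning a `p`-adic norm at most `p⁻ᵏ`.
Put `r = ⌊pc/m⌋ < p` and let `H_r` be the `r`-th harmonic number. The binomial side is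
`(-1)^r C(p-1, r) = ∏_{k<r} (1 - p/(k+1)) ≡ 1 - p H_r mod p²`.
On the Bernoulli side, `p ∣ pc/m` gives `{pc/m} ≡ -r mod p`; by von Staudt–Clausen every
non-constant coefficient of `B_{p-1}` is `p`-integral, so `B_{p-1}({pc/m}) ≡ B_{p-1}(-r) mod p`.
As `p - 1` is even, `B_{p-1}(-r) - B_{p-1} = (p-1) ∑_{k≤r} k^{p-2} ≡ -H_r mod p` by Fermat.
Hence `p (B_{p-1}({pc/m}) - B_{p-1}) ≡ -p H_r mod p²`, matching the binomial side.
-/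

open Finset

section Ultrametric

variable {R : Type*} [NormedCommRing R] [IsUltrametricDist R]

lemma norm_prod_one_add_sub_one_add_sum_le {ι : Type*} (s : Finset ι) (x : ι → R) {ε : ℝ}
    (hε₀ : 0 ≤ ε) (hε₁ : ε ≤ 1) (hx : ∀ i ∈ s, ‖x i‖ ≤ ε) :
    ‖∏ i ∈ s, (1 + x i) - (1 + ∑ i ∈ s, x i)‖ ≤ ε ^ 2 := by
  classical
  induction s using Finset.induction_on with
  | empty => simp [sq_nonneg]
  | insert a s ha ih =>
    rw [forall_mem_insert] at hx
    set P := ∏ i ∈ s, (1 + x i)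
    set S := ∑ i ∈ s, x i
    have hP : ‖P - (1 + S)‖ ≤ ε ^ 2 := ih hx.2
    have hS : ‖S‖ ≤ ε := IsUltrametricDist.norm_sum_le_of_forall_le_of_nonneg hε₀ hx.2
    have hP₁ : ‖P - 1‖ ≤ ε := calc
      ‖P - 1‖ = ‖(P - (1 + S)) + S‖ := by ring_nf
      _ ≤ max ‖P - (1 + S)‖ ‖S‖ := IsUltrametricDist.norm_add_le_max _ _
      _ ≤ ε := max_le (hP.trans (by nlinarith)) hS
    rw [prod_insert ha, sum_insert ha]
    calc ‖(1 + x a) * P - (1 + (x a + S))‖ = ‖(P - (1 + S)) + x a * (P - 1)‖ := by ring_nf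
      _ ≤ max ‖P - (1 + S)‖ ‖x a * (P - 1)‖ := IsUltrametricDist.norm_add_le_max _ _
      _ ≤ ε ^ 2 := max_le hP <| (norm_mul_le _ _).trans <| by
          rw [sq]; exact mul_le_mul hx.1 hP₁ (norm_nonneg _) hε₀

lemma Polynomial.norm_eval_sub_eval_le [NormOneClass R] (P : Polynomial R)
    (hP : ∀ i ≠ 0, ‖P.coeff i‖ ≤ 1) {a b : R} (ha : ‖a‖ ≤ 1) (hb : ‖b‖ ≤ 1) :
    ‖P.eval a - P.eval b‖ ≤ ‖a - b‖ := by
  rw [eval_eq_sum_range, eval_eq_sum_range, ← sum_sub_distrib]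
  refine IsUltrametricDist.norm_sum_le_of_forall_le_of_nonneg (norm_nonneg _) fun i _ ↦ ?_
  rcases eq_or_ne i 0 with rfl | hi
  · simp
  have hgeom : ‖∑ j ∈ range i, a ^ j * b ^ (i - 1 - j)‖ ≤ 1 :=
    IsUltrametricDist.norm_sum_le_of_forall_le_of_nonneg zero_le_one fun j _ ↦
      (norm_mul_le _ _).trans <|
        mul_le_one₀ ((norm_pow_le _ _).trans (pow_le_one₀ (norm_nonneg _) ha)) (norm_nonneg _)
          ((norm_pow_le _ _).trans (pow_le_one₀ (norm_nonneg _) hb))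
  calc ‖P.coeff i * a ^ i - P.coeff i * b ^ i‖
      = ‖P.coeff i * ((∑ j ∈ range i, a ^ j * b ^ (i - 1 - j)) * (a - b))‖ := by
        rw [geom_sum₂_mul, mul_sub]
    _ ≤ 1 * (1 * ‖a - b‖) :=
        (norm_mul_le _ _).trans <| mul_le_mul (hP i hi) ((norm_mul_le _ _).trans
          (mul_le_mul_of_nonneg_right hgeom (norm_nonneg _))) (norm_nonneg _) zero_le_one
    _ = ‖a - b‖ := by ring

lemma neg_one_pow_mul_choose_eq_prod {K : Type*} [Field K] [CharZero K] {N n : ℕ} (hn : n ≤ N) :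
    (-1) ^ n * (N.choose n : K) = ∏ i ∈ range n, (1 - ((N : K) + 1) / (i + 1)) := by
  induction n with
  | zero => simp
  | succ n ih =>
    have hchoose : (N.choose (n + 1) : K) * (n + 1) = N.choose n * (N - n) := by
      rw [← Nat.cast_sub (by omega)]
      exact_mod_cast Nat.choose_succ_right_eq N n
    rw [prod_range_succ, ← ih (by omega)]
    field_simp
    linear_combination (-1) * (-1) ^ n * hchoose

section PadicBernoulli

variable {p : ℕ} [hp : Fact p.Prime]

lemma norm_bernoulli_le_one {k : ℕ} (hk : k < p - 1) : ‖(bernoulli k : ℚ_[p])‖ ≤ 1 := by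
  obtain ⟨j, rfl | rfl⟩ := k.even_or_odd'
  · obtain ⟨n, hn⟩ := Bernoulli.vonStaudt_clausen j
    rw [eq_sub_of_add_eq hn.symm, Rat.cast_sub, sub_eq_add_neg]
    refine (IsUltrametricDist.norm_add_le_max _ _).trans
      (max_le (by simp [Padic.norm_int_le_one]) ?_)
    rw [norm_neg, Rat.cast_sum]
    refine IsUltrametricDist.norm_sum_le_of_forall_le_of_nonneg zero_le_one fun q hq ↦ ?_
    rw [mem_filter, mem_range] at hq
    have hpq : p.Coprime q := (Nat.coprime_primes hp.out hq.2.1).2 (by omega)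
    simp [Padic.norm_natCast_eq_one_iff.2 hpq]
  · rcases j with _ | j
    · have hp2 : p.Coprime 2 := (Nat.coprime_primes hp.out Nat.prime_two).2 (by omega)
      have h2 : ‖(2 : ℚ_[p])‖ = 1 := by exact_mod_cast Padic.norm_natCast_eq_one_iff.2 hp2
      simp [_root_.bernoulli_one, h2]
    · rw [bernoulli_eq_zero_of_odd ⟨_, rfl⟩ (by omega)]
      simp

lemma norm_coeff_bernoulli_le_one {i : ℕ} (hi : i ≠ 0) :
    ‖((Polynomial.bernoulli (p - 1)).coeff i : ℚ_[p])‖ ≤ 1 := by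
  rw [Polynomial.coeff_bernoulli]
  split_ifs with h
  · rw [Rat.cast_mul, Rat.cast_natCast]
    exact (norm_mul_le _ _).trans (mul_le_one₀ (norm_bernoulli_le_one (by omega)) (norm_nonneg _)
      (IsUltrametricDist.norm_natCast_le_one _ _))
  · simp

lemma norm_bernoulli_eval_sub_eval_le {a b : ℚ} (ha : ‖(a : ℚ_[p])‖ ≤ 1) (hb : ‖(b : ℚ_[p])‖ ≤ 1) :
    ‖(((Polynomial.bernoulli (p - 1)).eval a - (Polynomial.bernoulli (p - 1)).eval b : ℚ) : ℚ_[p])‖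
      ≤ ‖((a - b : ℚ) : ℚ_[p])‖ := by
  have := ((Polynomial.bernoulli (p - 1)).map (Rat.castHom ℚ_[p])).norm_eval_sub_eval_le
    (fun i hi ↦ by simpa using norm_coeff_bernoulli_le_one (p := p) hi) ha hb
  have hcast (q : ℚ) : ((Polynomial.bernoulli (p - 1)).eval₂ (Rat.castHom ℚ_[p]) (q : ℚ_[p])) =
      (((Polynomial.bernoulli (p - 1)).eval q : ℚ) : ℚ_[p]) := Polynomial.eval₂_hom _ q
  rw [Polynomial.eval_map, Polynomial.eval_map, hcast, hcast] at this
  exact_mod_cast this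

lemma Polynomial.bernoulli_eval_neg_natCast_sub {n : ℕ} (hn : Even n) (r : ℕ) :
    (Polynomial.bernoulli n).eval (-r : ℚ) - _root_.bernoulli n =
      n * ∑ k ∈ range r, ((k : ℚ) + 1) ^ (n - 1) := by
  rcases n with _ | m
  · simp
  have hm : m ≠ 0 := by rintro rfl; exact Nat.not_even_one hn
  have hshift : ∑ k ∈ range r, ((k : ℚ) + 1) ^ m = ∑ k ∈ range (r + 1), (k : ℚ) ^ m := by
    simp [sum_range_succ' _ r, hm]
  rw [bernoulli_eval_neg, hn.neg_one_pow, one_mul, bernoulli_succ_eval, add_tsub_cancel_right,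
    hshift, sum_range_succ]
  push_cast
  ring

lemma norm_inv_sub_pow_sub_two_le {k : ℕ} (hk : ¬ p ∣ k) :
    ‖(k : ℚ_[p])⁻¹ - (k : ℚ_[p]) ^ (p - 2)‖ ≤ (p : ℝ)⁻¹ := by
  have hpk : p.Coprime k := hp.out.coprime_iff_not_dvd.2 hk
  have hnorm : ‖(k : ℚ_[p])‖ = 1 := Padic.norm_natCast_eq_one_iff.2 hpk
  have hfermat : ‖((1 - (k : ℤ) ^ (p - 1) : ℤ) : ℚ_[p])‖ ≤ (p : ℝ)⁻¹ := by
    have hdvd : ((p : ℤ) ^ 1) ∣ 1 - (k : ℤ) ^ (p - 1) := by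
      rw [pow_one]
      exact (Int.ModEq.pow_card_sub_one_eq_one hp.out (Nat.isCoprime_iff_coprime.2 hpk.symm)).dvd
    have := (Padic.norm_int_le_pow_iff_dvd _ 1).2 hdvd
    rwa [Nat.cast_one, zpow_neg_one] at this
  have hk₀ : (k : ℚ_[p]) ≠ 0 := norm_ne_zero_iff.1 (by simp [hnorm])
  have hfactor :
      (k : ℚ_[p])⁻¹ - (k : ℚ_[p]) ^ (p - 2) = (k : ℚ_[p])⁻¹ * (1 - (k : ℚ_[p]) ^ (p - 1)) := by
    rw [show p - 1 = p - 2 + 1 by have := hp.out.two_le; omega, pow_succ]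
    field_simp
  rw [hfactor, norm_mul, norm_inv, hnorm, inv_one, one_mul]
  exact_mod_cast hfermat

lemma norm_harmonic_sub_sum_pow_le {r : ℕ} (hr : r < p) :
    ‖(harmonic r : ℚ_[p]) - ∑ k ∈ range r, ((k : ℚ_[p]) + 1) ^ (p - 2)‖ ≤ (p : ℝ)⁻¹ := by
  rw [harmonic, Rat.cast_sum, ← sum_sub_distrib]
  refine IsUltrametricDist.norm_sum_le_of_forall_le_of_nonneg (by positivity) fun k hk ↦ ?_
  have hk : ¬ p ∣ k + 1 := Nat.not_dvd_of_pos_of_lt k.succ_pos (by simp at hk; omega)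
  simpa using norm_inv_sub_pow_sub_two_le hk

lemma norm_neg_one_pow_mul_choose_sub_le {r : ℕ} (hr : r < p) :
    ‖(-1) ^ r * ((p - 1).choose r : ℚ_[p]) - (1 - p * harmonic r)‖ ≤ (p : ℝ)⁻¹ ^ 2 := by
  have hp₁ : ((p - 1 : ℕ) : ℚ_[p]) + 1 = p := by rw [Nat.cast_pred hp.out.pos]; ring
  have hterm (k : ℕ) (hk : k ∈ range r) : ‖-(p : ℚ_[p]) / (k + 1)‖ ≤ (p : ℝ)⁻¹ := by
    have hk : ¬ p ∣ k + 1 := Nat.not_dvd_of_pos_of_lt k.succ_pos (by simp at hk; omega)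
    rw [norm_div, norm_neg, Padic.norm_p, ← Nat.cast_succ,
      Padic.norm_natCast_eq_one_iff.2 (hp.out.coprime_iff_not_dvd.2 hk), div_one]
  have := norm_prod_one_add_sub_one_add_sum_le (range r) (fun k ↦ -(p : ℚ_[p]) / (k + 1))
    (by positivity) (inv_le_one_of_one_le₀ (by exact_mod_cast hp.out.one_le)) hterm
  have hprod :
      (-1) ^ r * ((p - 1).choose r : ℚ_[p]) = ∏ k ∈ range r, (1 + -(p : ℚ_[p]) / (k + 1)) := by
    rw [neg_one_pow_mul_choose_eq_prod (by omega), hp₁]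
    exact prod_congr rfl fun k _ ↦ by ring
  have hsum : (p : ℚ_[p]) * harmonic r = -∑ k ∈ range r, -(p : ℚ_[p]) / (k + 1) := by
    simp only [harmonic, Rat.cast_sum, mul_sum, ← sum_neg_distrib]
    push_cast
    exact sum_congr rfl fun k _ ↦ by ring
  rwa [hprod, hsum, sub_neg_eq_add]

lemma norm_bernoulli_eval_sub_add_harmonic_le (hodd : Odd p) {r : ℕ} (hr : r < p) {y : ℚ}
    (hy : ‖((y + r : ℚ) : ℚ_[p])‖ ≤ (p : ℝ)⁻¹) :
    ‖(((Polynomial.bernoulli (p - 1)).eval y - _root_.bernoulli (p - 1) + harmonic r : ℚ) : ℚ_[p])‖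
      ≤ (p : ℝ)⁻¹ := by
  set S := ∑ k ∈ range r, ((k : ℚ) + 1) ^ (p - 2)
  have htele := Polynomial.bernoulli_eval_neg_natCast_sub (Nat.Odd.sub_odd hodd odd_one) r
  rw [show p - 1 - 1 = p - 2 by omega] at htele
  have hr₁ : ‖((-r : ℚ) : ℚ_[p])‖ ≤ 1 := by
    simpa using IsUltrametricDist.norm_natCast_le_one ℚ_[p] r
  have hy₁ : ‖(y : ℚ_[p])‖ ≤ 1 := by
    have := IsUltrametricDist.norm_add_le_max ((y + r : ℚ) : ℚ_[p]) ((-r : ℚ) : ℚ_[p])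
    simp only [← Rat.cast_add, add_neg_cancel_right] at this
    exact this.trans
      (max_le (hy.trans (inv_le_one_of_one_le₀ (by exact_mod_cast hp.out.one_le))) hr₁)
  have hsplit : (Polynomial.bernoulli (p - 1)).eval y - _root_.bernoulli (p - 1) + harmonic r =
      ((Polynomial.bernoulli (p - 1)).eval y - (Polynomial.bernoulli (p - 1)).eval (-r : ℚ)) +
        (p * S + (harmonic r - S)) := by
    rw [← sub_add_sub_cancel _ ((Polynomial.bernoulli (p - 1)).eval (-r : ℚ)), htele,
      Nat.cast_pred hp.out.pos]
    ring
  rw [hsplit, Rat.cast_add, Rat.cast_add]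
  refine (IsUltrametricDist.norm_add_le_max _ _).trans (max_le ?_
    ((IsUltrametricDist.norm_add_le_max _ _).trans (max_le ?_ ?_)))
  · exact (norm_bernoulli_eval_sub_eval_le hy₁ hr₁).trans (by simpa using hy)
  · rw [Rat.cast_mul, norm_mul, Rat.cast_natCast, Padic.norm_p]
    refine mul_le_of_le_one_right (by positivity) ?_
    simpa [S] using IsUltrametricDist.norm_natCast_le_one ℚ_[p] (∑ k ∈ range r, (k + 1) ^ (p - 2))
  · simpa [S] using norm_harmonic_sub_sum_pow_le hr

end PadicBernoulli

theorem stmt_16_general (p m c : ℕ) (hp : p.Prime) (hodd : Odd p) (hpm : ¬ p ∣ m)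
    (hcm : c < m) :
    padicNorm p
        (((-1 : ℚ) ^ (p * c / m) * (Nat.choose (p - 1) (p * c / m) : ℚ))
          - (1 + (p : ℚ) * ((Polynomial.bernoulli (p - 1)).eval
              (Int.fract ((p * c : ℚ) / m)) - bernoulli (p - 1))))
      ≤ (p : ℚ) ^ (-2 : ℤ) := by
  have := Fact.mk hp
  set r := p * c / m
  have hr : r < p := (Nat.div_lt_iff_lt_mul (by omega)).2 (Nat.mul_lt_mul_of_pos_left hcm hp.pos)
  have hfract : Int.fract ((p * c : ℚ) / m) + r = (p * c : ℚ) / m := by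
    have hfloor : ⌊(p * c : ℚ) / m⌋ = r := by exact_mod_cast Rat.floor_natCast_div_natCast (p * c) m
    rw [← Int.self_sub_floor, hfloor]
    push_cast
    ring
  have hx : ‖(((p * c : ℚ) / m : ℚ) : ℚ_[p])‖ ≤ (p : ℝ)⁻¹ := by
    push_cast
    rw [norm_div, norm_mul, Padic.norm_p,
      Padic.norm_natCast_eq_one_iff.2 (hp.coprime_iff_not_dvd.2 hpm), div_one]
    exact mul_le_of_le_one_right (by positivity) (IsUltrametricDist.norm_natCast_le_one ℚ_[p] c)
  have hchoose := norm_neg_one_pow_mul_choose_sub_le hr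
  have hbern := norm_bernoulli_eval_sub_add_harmonic_le hodd hr (hfract ▸ hx)
  rw [← Rat.cast_le (K := ℝ), ← Padic.eq_padicNorm]
  calc _ = ‖((-1) ^ r * ((p - 1).choose r : ℚ_[p]) - (1 - p * harmonic r)) +
        -(p * ((((Polynomial.bernoulli (p - 1)).eval (Int.fract ((p * c : ℚ) / m)) -
          bernoulli (p - 1) + harmonic r : ℚ) : ℚ_[p])))‖ := by push_cast; congr 1; ring
    _ ≤ (p : ℝ)⁻¹ ^ 2 := by
      refine (IsUltrametricDist.norm_add_le_max _ _).trans (max_le hchoose ?_)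
      rw [norm_neg, norm_mul, Padic.norm_p, sq]
      exact mul_le_mul_of_nonneg_left hbern (by positivity)
    _ = _ := by push_cast; rw [zpow_neg, zpow_ofNat, inv_pow]

theorem stmt_16 (p m c : ℕ) (hp : p.Prime) (hodd : Odd p) (hpm : ¬ p ∣ m)
    (hc : 0 < c) (hcm : c < m) :
    padicNorm p
        (((-1 : ℚ) ^ (p * c / m) * (Nat.choose (p - 1) (p * c / m) : ℚ))
          - (1 + (p : ℚ) * ((Polynomial.bernoulli (p - 1)).eval
              (Int.fract ((p * c : ℚ) / m)) - bernoulli (p - 1))))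
      ≤ (p : ℚ) ^ (-2 : ℤ) :=
  stmt_16_general p m c hp hodd hpm hcm
end Ultrametric
end

section
/- (Granville) Let p be an odd prime and m a positive integer not divisible by p. Then ∏_{k=1}^{m−1} C(p−1, ⌊pk/m⌋) ≡ (−1)^{(m−1)(p−1)/2} · (m^p − m + 1) (mod p²). -/
/-!
Modulo `p²` one has `C(p-1, j) ≡ (-1)^j (1 - p H_j)` with `H_j = ∑_{i ≤ j} 1/i`, and since
`p² ≡ 0` the product of the factors `1 - p H_j` is `1 - p ∑ H_j`. The signs multiply to
`(-1)^{∑_k ⌊pk/m⌋}`, and pairing `k` with `m - k` gives `∑_k ⌊pk/m⌋ = (m-1)(p-1)/2`.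
Counting lattice points below the line `y = px/m` rewrites `∑_k H_{⌊pk/m⌋}` as
`∑_{i<p} (m - 1 - ⌊mi/p⌋)/i`. Modulo `p`, `H_{p-1}` vanishes (pair `i` with `p - i`), and
Lerch's formula `p ∑_{i<p} ⌊mi/p⌋/i ≡ m^p - m (mod p²)` comes from expanding
`m^{p-1} (p-1)! = ∏_i mi = ∏_i (mi mod p + p⌊mi/p⌋)`, the residues `mi mod p` being a
permutation of `1, …, p-1`.
-/

open Finset

lemma prod_one_add_mul_of_mul_self_eq_zero {ι R : Type*} [CommRing R] {ε : R} (hε : ε * ε = 0)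
    (s : Finset ι) (x : ι → R) : ∏ i ∈ s, (1 + ε * x i) = 1 + ε * ∑ i ∈ s, x i := by
  classical
  induction s using Finset.induction_on with
  | empty => simp
  | insert a s ha ih =>
    rw [prod_insert ha, sum_insert ha, ih]
    linear_combination (x a * ∑ i ∈ s, x i) * hε

lemma mul_div_add_mul_sub_div {n m k : ℕ} (hk : k ≤ m) (h : ¬ m ∣ n * k) :
    n * k / m + n * (m - k) / m = n - 1 := by
  have hm : 0 < m := Nat.pos_of_ne_zero fun h0 => h (by simp_all)
  have hsum : n * k + n * (m - k) = n * m := by rw [← Nat.mul_add, Nat.add_sub_cancel' hk]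
  have hmod : m ≤ n * k % m + n * (m - k) % m := by
    have h1 : 0 < n * k % m := Nat.pos_of_ne_zero fun h0 => h (Nat.dvd_of_mod_eq_zero h0)
    have h2 := Nat.add_mod (n * k) (n * (m - k)) m
    rw [hsum, Nat.mul_mod_left] at h2
    by_contra! hlt
    rw [Nat.mod_eq_of_lt hlt] at h2
    omega
  have := Nat.add_div_eq_of_le_mod_add_mod hmod hm
  rw [hsum, Nat.mul_div_cancel _ hm] at this
  exact (Nat.sub_eq_of_eq_add this).symm

lemma sum_Ico_mul_div {n m : ℕ} (hnm : n.Coprime m) :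
    ∑ k ∈ Ico 1 m, n * k / m = (m - 1) * (n - 1) / 2 := by
  have hreflect : ∑ k ∈ Ico 1 m, n * (m - k) / m = ∑ k ∈ Ico 1 m, n * k / m := by
    rcases Nat.eq_zero_or_pos m with rfl | hm
    · simp
    · rw [sum_Ico_reflect (fun k => n * k / m) 1 (by omega), Nat.add_sub_cancel_left,
        Nat.add_sub_cancel]
  have hpair : ∀ k ∈ Ico 1 m, n * k / m + n * (m - k) / m = n - 1 := by
    intro k hk
    rw [mem_Ico] at hk
    refine mul_div_add_mul_sub_div hk.2.le fun hdvd => ?_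
    have := Nat.le_of_dvd (by omega) (hnm.symm.dvd_of_dvd_mul_left hdvd)
    omega
  have := sum_congr rfl hpair
  rw [sum_add_distrib, hreflect, sum_const, Nat.card_Ico, smul_eq_mul] at this
  omega

lemma mul_div_lt_of_lt {a b c : ℕ} (hb : 0 < b) (hca : c < a) : b * c / a < b :=
  Nat.div_lt_of_lt_mul (by rw [Nat.mul_comm a]; exact Nat.mul_lt_mul_of_pos_left hca hb)

lemma le_mul_div_iff_mul_div_lt {p m i k : ℕ} (hp : 0 < p) (hm : 0 < m) (h : m * i ≠ p * k) :
    i ≤ p * k / m ↔ m * i / p < k := by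
  rw [Nat.le_div_iff_mul_le hm, Nat.div_lt_iff_lt_mul hp, Nat.mul_comm i, Nat.mul_comm k]
  omega

lemma sum_Ico_sum_Icc_mul_div {M : Type*} [AddCommMonoid M] {p m : ℕ} (hpm : p.Coprime m)
    (f : ℕ → M) :
    ∑ k ∈ Ico 1 m, ∑ i ∈ Icc 1 (p * k / m), f i
      = ∑ i ∈ Ico 1 p, (m - 1 - m * i / p) • f i := by
  have hswap : ∀ k i,
      k ∈ Ico 1 m ∧ i ∈ Icc 1 (p * k / m)
        ↔ k ∈ Ico (m * i / p + 1) m ∧ i ∈ Ico 1 p := by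
    intro k i
    have hne : 0 < i → i < p → m * i ≠ p * k := fun hi0 hip h => by
      have := Nat.le_of_dvd hi0 (hpm.dvd_of_dvd_mul_left (Dvd.intro k h.symm))
      omega
    simp only [mem_Ico, mem_Icc]
    constructor
    · rintro ⟨⟨hk1, hkm⟩, hi1, hik⟩
      have hp : 0 < p := Nat.pos_of_ne_zero fun hp0 => by simp [hp0] at hik; omega
      have hip : i < p := hik.trans_lt (mul_div_lt_of_lt hp hkm)
      rw [le_mul_div_iff_mul_div_lt hp (by omega) (hne hi1 hip)] at hik
      exact ⟨⟨hik, hkm⟩, hi1, hip⟩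
    · rintro ⟨⟨hik, hkm⟩, hi1, hip⟩
      rw [le_mul_div_iff_mul_div_lt (by omega) (by omega) (hne hi1 hip)]
      exact ⟨⟨Nat.le_of_add_left_le hik, hkm⟩, hi1, hik⟩
  rw [sum_comm' hswap]
  refine sum_congr rfl fun i _ => ?_
  rw [sum_const, Nat.card_Ico, Nat.sub_sub, Nat.add_comm 1]

lemma natCast_mul_self_eq_zero (p : ℕ) : (p : ZMod (p ^ 2)) * p = 0 := by
  rw [← Nat.cast_mul, ← sq, ZMod.natCast_self]

lemma isUnit_natCast_of_not_dvd {p n : ℕ} (hp : p.Prime) (h : ¬ p ∣ n) :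
    IsUnit (n : ZMod (p ^ 2)) :=
  (ZMod.isUnit_iff_coprime n _).mpr ((hp.coprime_iff_not_dvd.mpr h).symm.pow_right 2)

lemma natCast_choose_pred_eq_neg_one_pow_mul {p j : ℕ} (hp : p.Prime) (hj : j < p) :
    ((p - 1).choose j : ZMod (p ^ 2))
      = (-1) ^ j * (1 - p * ∑ i ∈ Icc 1 j, (i : ZMod (p ^ 2))⁻¹) := by
  induction j with
  | zero => simp
  | succ j ih =>
    have hu := isUnit_natCast_of_not_dvd hp (Nat.not_dvd_of_pos_of_lt j.succ_pos hj)
    refine hu.mul_right_cancel ?_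
    have hrec := congrArg (Nat.cast (R := ZMod (p ^ 2))) (Nat.choose_succ_right_eq (p - 1) j)
    rw [Nat.cast_mul, Nat.cast_mul, Nat.cast_sub (by omega), Nat.cast_pred hp.pos] at hrec
    rw [hrec, ih (by omega), sum_Icc_succ_top (by omega)]
    push_cast at hu ⊢
    linear_combination (-(-1) ^ j * (p : ZMod (p ^ 2))) * ZMod.mul_inv_of_unit _ hu
      - ((-1) ^ j * ∑ i ∈ Icc 1 j, (i : ZMod (p ^ 2))⁻¹) * natCast_mul_self_eq_zero p

lemma natCast_mul_sum_Ico_inv_eq_zero {p : ℕ} (hp : p.Prime) (hodd : Odd p) :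
    (p : ZMod (p ^ 2)) * ∑ i ∈ Ico 1 p, (i : ZMod (p ^ 2))⁻¹ = 0 := by
  have hreflect : ∑ i ∈ Ico 1 p, ((p - i : ℕ) : ZMod (p ^ 2))⁻¹
      = ∑ i ∈ Ico 1 p, (i : ZMod (p ^ 2))⁻¹ := by
    rw [sum_Ico_reflect (fun i => (i : ZMod (p ^ 2))⁻¹) 1 p.le_succ, Nat.add_sub_cancel_left,
      Nat.add_sub_cancel]
  have hterm : ∀ i ∈ Ico 1 p,
      (p : ZMod (p ^ 2)) * ((p - i : ℕ) : ZMod (p ^ 2))⁻¹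
        = -(p * (i : ZMod (p ^ 2))⁻¹) := by
    intro i hi
    rw [mem_Ico] at hi
    have hi' := ZMod.mul_inv_of_unit _ (isUnit_natCast_of_not_dvd hp
      (Nat.not_dvd_of_pos_of_lt hi.1 hi.2))
    have hpi := ZMod.mul_inv_of_unit _ (isUnit_natCast_of_not_dvd hp
      (Nat.not_dvd_of_pos_of_lt (Nat.sub_pos_of_lt hi.2) (Nat.sub_lt hp.pos hi.1)))
    set a := ((p - i : ℕ) : ZMod (p ^ 2))
    have ha : a = p - i := Nat.cast_sub hi.2.le
    -- `p * x⁻¹` only depends on `x` modulo `p`, and `a ≡ -i`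
    linear_combination (-(p : ZMod (p ^ 2)) * a⁻¹) * hi' - (p * (i : ZMod (p ^ 2))⁻¹) * hpi
      + (p * a⁻¹ * (i : ZMod (p ^ 2))⁻¹) * ha
      + (a⁻¹ * (i : ZMod (p ^ 2))⁻¹) * natCast_mul_self_eq_zero p
  have h2 : IsUnit (2 : ZMod (p ^ 2)) := by
    exact_mod_cast isUnit_natCast_of_not_dvd hp fun h => by
      have := (Nat.prime_dvd_prime_iff_eq hp Nat.prime_two).mp h
      subst this
      exact absurd hodd (by decide)
  refine h2.mul_left_cancel ?_
  calc 2 * ((p : ZMod (p ^ 2)) * ∑ i ∈ Ico 1 p, (i : ZMod (p ^ 2))⁻¹)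
      = p * ∑ i ∈ Ico 1 p, (i : ZMod (p ^ 2))⁻¹
          + p * ∑ i ∈ Ico 1 p, ((p - i : ℕ) : ZMod (p ^ 2))⁻¹ := by
        rw [hreflect]; ring
    _ = 2 * 0 := by
        rw [mul_sum, mul_sum, ← sum_add_distrib, sum_eq_zero]
        · ring
        · intro i hi
          rw [hterm i hi, add_neg_cancel]

lemma prod_Ico_mul_mod {m n : ℕ} (h : m.Coprime n) :
    ∏ i ∈ Ico 1 n, (m * i % n) = ∏ i ∈ Ico 1 n, i := by
  have hmaps : ∀ i ∈ Ico 1 n, m * i % n ∈ Ico 1 n := by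
    intro i hi
    rw [mem_Ico] at hi ⊢
    refine ⟨Nat.pos_of_ne_zero fun h0 => ?_, Nat.mod_lt _ (by omega)⟩
    exact Nat.not_dvd_of_pos_of_lt hi.1 hi.2
      (h.symm.dvd_of_dvd_mul_left (Nat.dvd_of_mod_eq_zero h0))
  have hinj : Set.InjOn (fun i => m * i % n) (Ico 1 n) := by
    intro i hi j hj hij
    simp only [coe_Ico, Set.mem_Ico] at hi hj
    exact (Nat.ModEq.cancel_left_of_coprime (by rwa [Nat.gcd_comm]) hij).eq_of_lt_of_lt hi.2 hj.2
  exact prod_nbij _ hmaps hinj (surjOn_of_injOn_of_card_le _ hmaps hinj le_rfl) fun _ _ => rfl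

lemma lerch_formula {p m : ℕ} (hp : p.Prime) (hpm : ¬ p ∣ m) :
    (p : ZMod (p ^ 2))
        * ∑ i ∈ Ico 1 p, ((m * i / p : ℕ) : ZMod (p ^ 2)) * (i : ZMod (p ^ 2))⁻¹
      = m ^ p - m := by
  set s : ℕ → ZMod (p ^ 2) := fun i => ((m * i % p : ℕ) : ZMod (p ^ 2))
  set t : ℕ → ZMod (p ^ 2) := fun i => ((m * i / p : ℕ) : ZMod (p ^ 2))
  have hdiv (i : ℕ) : s i + p * t i = m * i := by
    simp only [s, t]
    exact_mod_cast congrArg (Nat.cast (R := ZMod (p ^ 2))) (Nat.mod_add_div (m * i) p)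
  have hunit : ∀ i ∈ Ico 1 p, IsUnit (i : ZMod (p ^ 2)) ∧ IsUnit (s i) := by
    intro i hi
    rw [mem_Ico] at hi
    have hi' : ¬ p ∣ i := Nat.not_dvd_of_pos_of_lt hi.1 hi.2
    refine ⟨isUnit_natCast_of_not_dvd hp hi', isUnit_natCast_of_not_dvd hp fun h => ?_⟩
    rw [← Nat.dvd_add_left (dvd_mul_right p (m * i / p)), Nat.mod_add_div] at h
    exact (hp.dvd_mul.mp h).elim hpm hi'
  have hsplit : ∀ i ∈ Ico 1 p,
      (m : ZMod (p ^ 2)) * i = s i * (1 + p * (t i * (s i)⁻¹)) := by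
    intro i hi
    linear_combination -hdiv i - p * t i * ZMod.mul_inv_of_unit _ (hunit i hi).2
  have hprod : (m : ZMod (p ^ 2)) ^ (p - 1) * ∏ i ∈ Ico 1 p, (i : ZMod (p ^ 2))
      = (1 + p * ∑ i ∈ Ico 1 p, t i * (s i)⁻¹) * ∏ i ∈ Ico 1 p, (i : ZMod (p ^ 2)) := by
    calc _ = ∏ i ∈ Ico 1 p, (m : ZMod (p ^ 2)) * i := by
          rw [prod_mul_distrib, prod_const, Nat.card_Ico]
      _ = _ := by
          rw [prod_congr rfl hsplit, prod_mul_distrib,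
            prod_one_add_mul_of_mul_self_eq_zero (natCast_mul_self_eq_zero p), ← Nat.cast_prod,
            prod_Ico_mul_mod (hp.coprime_iff_not_dvd.mpr hpm).symm, Nat.cast_prod, mul_comm]
  have hfermat : (m : ZMod (p ^ 2)) ^ (p - 1) = 1 + p * ∑ i ∈ Ico 1 p, t i * (s i)⁻¹ :=
    (IsUnit.prod_iff.mpr fun i hi => (hunit i hi).1).mul_right_cancel hprod
  have hterm : ∀ i ∈ Ico 1 p,
      (p : ZMod (p ^ 2)) * (t i * (i : ZMod (p ^ 2))⁻¹) = m * (p * (t i * (s i)⁻¹)) := by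
    intro i hi
    -- as above, `p * x⁻¹` only depends on `x` modulo `p`, and `s i ≡ m * i`
    linear_combination (-p * t i * (i : ZMod (p ^ 2))⁻¹) * ZMod.mul_inv_of_unit _ (hunit i hi).2
      + (p * t i * (s i)⁻¹ * m) * ZMod.mul_inv_of_unit _ (hunit i hi).1
      + (p * t i * (i : ZMod (p ^ 2))⁻¹ * (s i)⁻¹) * hdiv i
      - (t i ^ 2 * (i : ZMod (p ^ 2))⁻¹ * (s i)⁻¹) * natCast_mul_self_eq_zero p
  have hpow : (m : ZMod (p ^ 2)) ^ p = m * m ^ (p - 1) := by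
    rw [← pow_succ', Nat.sub_add_cancel hp.one_le]
  calc _ = m * (p * ∑ i ∈ Ico 1 p, t i * (s i)⁻¹) := by
        rw [mul_sum, mul_sum, mul_sum]
        exact sum_congr rfl hterm
    _ = m ^ p - m := by
        rw [hpow, hfermat]
        ring

lemma natCast_mul_sum_Ico_sum_Icc_inv {p m : ℕ} (hp : p.Prime) (hodd : Odd p) (hpm : ¬ p ∣ m) :
    (p : ZMod (p ^ 2)) * ∑ k ∈ Ico 1 m, ∑ i ∈ Icc 1 (p * k / m), (i : ZMod (p ^ 2))⁻¹
      = m - m ^ p := by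
  have hcount : ∀ i ∈ Ico 1 p, ((m - 1 - m * i / p : ℕ) : ZMod (p ^ 2))
      = ((m - 1 : ℕ) : ZMod (p ^ 2)) - ((m * i / p : ℕ) : ZMod (p ^ 2)) := by
    intro i hi
    rw [mem_Ico] at hi
    have hm : 0 < m := Nat.pos_of_ne_zero fun h => hpm (h ▸ dvd_zero p)
    exact Nat.cast_sub (Nat.le_sub_one_of_lt (mul_div_lt_of_lt hm hi.2))
  rw [sum_Ico_sum_Icc_mul_div (hp.coprime_iff_not_dvd.mpr hpm)]
  simp only [nsmul_eq_mul]
  rw [sum_congr rfl fun i hi => by rw [hcount i hi, sub_mul], sum_sub_distrib, ← mul_sum, mul_sub,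
    mul_left_comm, natCast_mul_sum_Ico_inv_eq_zero hp hodd, lerch_formula hp hpm]
  ring

theorem stmt_17_general (p m : ℕ) (hp : p.Prime) (hodd : Odd p)
    (hpm : ¬ p ∣ m) :
    (∏ k ∈ Finset.Ico 1 m, (Nat.choose (p - 1) (p * k / m) : ℤ))
      ≡ (-1) ^ ((m - 1) * (p - 1) / 2) * ((m : ℤ) ^ p - m + 1)
        [ZMOD (p : ℤ) ^ 2] := by
  have hj : ∀ k ∈ Ico 1 m, p * k / m < p :=
    fun k hk => mul_div_lt_of_lt hp.pos (mem_Ico.mp hk).2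
  rw [show (p : ℤ) ^ 2 = ((p ^ 2 : ℕ) : ℤ) by push_cast; rfl, ← ZMod.intCast_eq_intCast_iff]
  push_cast
  rw [prod_congr rfl fun k hk => natCast_choose_pred_eq_neg_one_pow_mul hp (hj k hk),
    prod_mul_distrib, prod_pow_eq_pow_sum, sum_Ico_mul_div (hp.coprime_iff_not_dvd.mpr hpm)]
  have := prod_one_add_mul_of_mul_self_eq_zero (natCast_mul_self_eq_zero p) (Ico 1 m)
    fun k => -∑ i ∈ Icc 1 (p * k / m), (i : ZMod (p ^ 2))⁻¹
  simp only [mul_neg, ← sub_eq_add_neg, sum_neg_distrib] at this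
  rw [this, natCast_mul_sum_Ico_sum_Icc_inv hp hodd hpm]
  ring

theorem stmt_17 (p m : ℕ) (hp : p.Prime) (hodd : Odd p) (hm : 0 < m)
    (hpm : ¬ p ∣ m) :
    (∏ k ∈ Finset.Ico 1 m, (Nat.choose (p - 1) (p * k / m) : ℤ))
      ≡ (-1) ^ ((m - 1) * (p - 1) / 2) * ((m : ℤ) ^ p - m + 1)
        [ZMOD (p : ℤ) ^ 2] :=
  stmt_17_general p m hp hodd hpm
end
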